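/- Let 1 < p, q < ∞ with 1/p + 1/q = 1. The map ψ : bv_p* → l_q defined by ψ(f) = (f(b^{(k)}))_{k≥1} is an isometric linear isomorphism; that is, ψ is linear, bijective, and satisfies ‖ψ(f)‖_q = ‖f‖ for every continuous linear functional f on bv_p. In particular, the continuous dual of bv_p is isometrically isomorphic to l_q. -/

import Mathlib

noncomputable section

open Filter Topology
open scoped ENNReal

/-- The difference operator: sequences indexed from `0`, representing `(x_k)_{k ≥ 1}`
(so index `n : ℕ` stands for `x_{n+1}`), with the convention `x_0 = 0`. -/
def delta (x : ℕ → ℂ) : ℕ → ℂ := fun n => x n - if n = 0 then 0 else x (n - 1)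

/-- The difference operator as a linear equivalence of the space of all sequences,
with inverse given by partial sums. -/
def deltaL : (ℕ → ℂ) ≃ₗ[ℂ] (ℕ → ℂ) where
  toFun := delta
  invFun y := fun n => ∑ i ∈ Finset.range (n + 1), y i
  map_add' x y := by
    funext n
    simp only [delta, Pi.add_apply]
    split <;> ring
  map_smul' c x := by
    funext n
    simp only [delta, Pi.smul_apply, smul_eq_mul, RingHom.id_apply]
    split <;> ring
  left_inv x := by
    funext n
    induction n with
    | zero => simp [delta]
    | succ k ih =>
      show (∑ i ∈ Finset.range (k + 1 + 1), delta x i) = x (k + 1)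
      rw [Finset.sum_range_succ]
      have ih' : (∑ i ∈ Finset.range (k + 1), delta x i) = x k := ih
      rw [ih']
      simp [delta]
  right_inv y := by
    funext n
    show delta (fun n => ∑ i ∈ Finset.range (n + 1), y i) n = y n
    cases n with
    | zero => simp [delta]
    | succ k => simp [delta, Finset.sum_range_succ]

/-- The space `bv_p`, as a submodule of the space of all complex sequences:
`x ∈ bv_p` iff `Δx ∈ ℓ^p`. -/
def bvSubmodule (p : ℝ≥0∞) : Submodule ℂ (ℕ → ℂ) where
  carrier := {x | Memℓp (delta x) p}
  add_mem' {x y} hx hy := by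
    have : delta (x + y) = delta x + delta y := map_add deltaL x y
    simpa [Set.mem_setOf_eq, this] using hx.add hy
  zero_mem' := by
    have : delta (0 : ℕ → ℂ) = 0 := map_zero deltaL
    simp [Set.mem_setOf_eq, this]
    exact zero_memℓp
  smul_mem' c x hx := by
    have : delta (c • x) = c • delta x := map_smul deltaL c x
    simpa [Set.mem_setOf_eq, this] using hx.const_smul c

/-- The space `bv_p` as a type.  (A `def`, not an `abbrev`, so that it does not pick up
the product topology of the ambient sequence space.) -/
def bv (p : ℝ≥0∞) : Type := ↥(bvSubmodule p)

namespace bv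

instance (p : ℝ≥0∞) : AddCommGroup (bv p) :=
  inferInstanceAs (AddCommGroup ↥(bvSubmodule p))

instance (p : ℝ≥0∞) : Module ℂ (bv p) :=
  inferInstanceAs (Module ℂ ↥(bvSubmodule p))

/-- The underlying sequence of an element of `bv_p`. -/
def seq {p : ℝ≥0∞} (x : bv p) : ℕ → ℂ := Subtype.val (x : ↥(bvSubmodule p))

lemma memℓp_delta {p : ℝ≥0∞} (x : bv p) : Memℓp (delta (seq x)) p :=
  (x : ↥(bvSubmodule p)).2

/-- The difference operator, as a linear map from `bv_p` to `ℓ^p`. -/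
def toLp (p : ℝ≥0∞) : bv p →ₗ[ℂ] lp (fun _ : ℕ => ℂ) p where
  toFun x := ⟨delta (seq x), memℓp_delta x⟩
  map_add' x y := by
    ext n
    have : delta (seq x + seq y) = delta (seq x) + delta (seq y) := map_add deltaL _ _
    change delta (seq (x + y)) n = _
    have hseq : seq (x + y) = seq x + seq y := rfl
    rw [hseq, this]
    rfl
  map_smul' c x := by
    ext n
    have : delta (c • seq x) = c • delta (seq x) := map_smul deltaL c _
    change delta (seq (c • x)) n = _
    have hseq : seq (c • x) = c • seq x := rfl
    rw [hseq, this]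
    rfl

lemma toLp_injective (p : ℝ≥0∞) : Function.Injective (toLp p) := by
  intro x y h
  have h' : delta (seq x) = delta (seq y) := by
    have := congrArg (Subtype.val) h
    exact this
  have : seq x = seq y := deltaL.injective h'
  exact Subtype.ext this

noncomputable instance (p : ℝ≥0∞) [Fact (1 ≤ p)] : NormedAddCommGroup (bv p) :=
  NormedAddCommGroup.induced (bv p) (lp (fun _ : ℕ => ℂ) p) (toLp p) (toLp_injective p)

noncomputable instance (p : ℝ≥0∞) [Fact (1 ≤ p)] : NormedSpace ℂ (bv p) :=
  NormedSpace.induced ℂ (bv p) (lp (fun _ : ℕ => ℂ) p) (toLp p)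

end bv

/-- The sequence `b^{(k+1)}`: `1` from position `k` on (positions indexed from `0`). -/
def bSeq (k : ℕ) : ℕ → ℂ := fun n => if k ≤ n then 1 else 0

/-- The sequence `e^{(k+1)}`: `1` exactly at position `k`. -/
def eSeq (k : ℕ) : ℕ → ℂ := fun n => if n = k then 1 else 0

lemma memℓp_eSeq (p : ℝ≥0∞) [Fact (1 ≤ p)] (k : ℕ) : Memℓp (eSeq k) p := by
  rcases eq_or_ne p ∞ with rfl | hp
  · apply memℓp_infty
    apply Set.Finite.bddAbove
    apply Set.Finite.subset (Set.finite_singleton (0:ℝ) |>.insert 1)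
    rintro r ⟨n, rfl⟩
    simp only [eSeq]
    split <;> simp
  · apply memℓp_gen
    apply summable_of_ne_finset_zero (s := {k})
    intro n hn
    simp only [Finset.mem_singleton] at hn
    simp only [eSeq, if_neg hn, norm_zero]
    have hp0 : 0 < p.toReal := by
      have h1 : (1 : ℝ≥0∞) ≤ p := Fact.out
      exact ENNReal.toReal_pos (by intro h; rw [h] at h1; simp at h1) hp
    exact Real.zero_rpow hp0.ne'

lemma delta_bSeq (k : ℕ) : delta (bSeq k) = eSeq k := by
  funext n
  rcases n with _ | m <;>
    simp only [delta, bSeq, eSeq, Nat.add_sub_cancel, Nat.succ_ne_zero, if_false, reduceIte,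
      sub_zero] <;>
    split_ifs <;> first | omega | (exfalso; omega) | (norm_num; done) | tauto

lemma delta_eSeq (k : ℕ) : delta (eSeq k) = eSeq k - eSeq (k + 1) := by
  funext n
  rcases n with _ | m <;>
    simp only [delta, eSeq, Pi.sub_apply, Nat.add_sub_cancel, Nat.succ_ne_zero, if_false,
      reduceIte, sub_zero] <;>
    split_ifs <;> first | omega | (exfalso; omega) | (norm_num; done) | tauto

/-- The element `b^{(k+1)}` of `bv_p`. -/
def bvB (p : ℝ≥0∞) [Fact (1 ≤ p)] (k : ℕ) : bv p :=
  ⟨bSeq k, show Memℓp (delta (bSeq k)) p by rw [delta_bSeq]; exact memℓp_eSeq p k⟩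

/-- The element `e^{(k+1)}` of `bv_p`. -/
def bvE (p : ℝ≥0∞) [Fact (1 ≤ p)] (k : ℕ) : bv p :=
  ⟨eSeq k, show Memℓp (delta (eSeq k)) p by
    rw [delta_eSeq]; exact (memℓp_eSeq p k).sub (memℓp_eSeq p (k + 1))⟩

/-!
The difference operator `Δ` maps `bv_p` isometrically onto `ℓ^p` and sends `b^{(k)}` to the unit
vector `e_k`, so `ψ` is the classical identification of `(ℓ^p)*` with `ℓ^q`, transported along `Δ`.
For that identification, Hölder's inequality bounds the functional `f ↦ ∑ aᵢ fᵢ` by `‖a‖_q`; the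
reverse bound, and the fact that `(g eᵢ)ᵢ ∈ ℓ^q` for every functional `g`, come from testing `g`
against `xᵢ = |aᵢ|^q / aᵢ` on a finite set of indices, where `aᵢ = g eᵢ`.
-/

namespace LinearIsometryEquiv

variable {𝕜 E F : Type*} [NontriviallyNormedField 𝕜] [NormedAddCommGroup E] [NormedSpace 𝕜 E]
  [NormedAddCommGroup F] [NormedSpace 𝕜 F]

def strongDualCongr (e : E ≃ₗᵢ[𝕜] F) : StrongDual 𝕜 E ≃ₗᵢ[𝕜] StrongDual 𝕜 F where
  toLinearEquiv := (e.toContinuousLinearEquiv.arrowCongr (.refl 𝕜 𝕜)).toLinearEquiv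
  norm_map' f := f.opNorm_comp_linearIsometryEquiv e.symm

@[simp]
lemma strongDualCongr_apply (e : E ≃ₗᵢ[𝕜] F) (f : StrongDual 𝕜 E) (x : F) :
    e.strongDualCongr f x = f (e.symm x) :=
  rfl

end LinearIsometryEquiv

lemma Real.HolderConjugate.le_rpow_of_le_mul_rpow {p q S C : ℝ} (hpq : p.HolderConjugate q)
    (hS : 0 ≤ S) (hC : 0 ≤ C) (h : S ≤ C * S ^ p⁻¹) : S ≤ C ^ q := by
  rcases hS.eq_or_lt with rfl | hS
  · positivity
  have hSq : S ^ q⁻¹ ≤ C := by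
    have hsplit : S ^ q⁻¹ * S ^ p⁻¹ = S := by
      rw [← Real.rpow_add hS, add_comm, hpq.inv_add_inv_eq_one, Real.rpow_one]
    exact le_of_mul_le_mul_right (hsplit.le.trans h) (by positivity)
  calc S = (S ^ q⁻¹) ^ q := by rw [← Real.rpow_mul hS.le, inv_mul_cancel₀ hpq.symm.ne_zero,
          Real.rpow_one]
    _ ≤ C ^ q := Real.rpow_le_rpow (by positivity) hSq hpq.symm.nonneg

namespace RCLike

variable {𝕜 : Type*} [RCLike 𝕜]

lemma ofReal_norm_rpow_div_mul_self (z : 𝕜) {r : ℝ} (hr : r ≠ 0) :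
    ((‖z‖ ^ r : ℝ) : 𝕜) / z * z = ((‖z‖ ^ r : ℝ) : 𝕜) := by
  rcases eq_or_ne z 0 with rfl | hz
  · simp [Real.zero_rpow hr]
  · exact div_mul_cancel₀ _ hz

lemma norm_ofReal_norm_rpow_div_self_rpow {p q : ℝ} (hpq : p.HolderConjugate q) (z : 𝕜) :
    ‖((‖z‖ ^ q : ℝ) : 𝕜) / z‖ ^ p = ‖z‖ ^ q := by
  rcases eq_or_ne z 0 with rfl | hz
  · simp [Real.zero_rpow hpq.ne_zero, Real.zero_rpow hpq.symm.ne_zero]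
  have hz' : ‖z‖ ≠ 0 := norm_ne_zero_iff.mpr hz
  rw [norm_div, RCLike.norm_ofReal, abs_of_nonneg (by positivity), ← Real.rpow_sub_one hz',
    ← Real.rpow_mul (norm_nonneg z), hpq.symm.sub_one_mul_conj]

end RCLike

namespace lp

variable {ι 𝕜 : Type*} [RCLike 𝕜] {p q : ℝ≥0∞} [Fact (1 ≤ p)]

section

variable [Fact (1 ≤ q)] [p.HolderConjugate q]

variable (p q) in
noncomputable def toStrongDual :
    lp (fun _ : ι => 𝕜) q →L[𝕜] StrongDual 𝕜 (lp (fun _ : ι => 𝕜) p) :=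
  dualPairing q p (fun _ => ContinuousLinearMap.mul 𝕜 𝕜) (K := 1)
    fun _ => (ContinuousLinearMap.opNorm_mul_le 𝕜 𝕜).trans_eq NNReal.coe_one.symm

lemma toStrongDual_apply (a : lp (fun _ : ι => 𝕜) q) (f : lp (fun _ : ι => 𝕜) p) :
    toStrongDual p q a f = ∑' i, a i * f i :=
  rfl

lemma norm_toStrongDual_le_one : ‖(toStrongDual p q : lp (fun _ : ι => 𝕜) q →L[𝕜] _)‖ ≤ 1 :=
  (norm_dualPairing _ _).trans_eq NNReal.coe_one

end

variable [DecidableEq ι]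

lemma hasSum_mul_apply_single (hp : p ≠ ∞) (g : StrongDual 𝕜 (lp (fun _ : ι => 𝕜) p))
    (f : lp (fun _ : ι => 𝕜) p) :
    HasSum (fun i => f i * g (lp.single p i 1)) (g f) := by
  convert (lp.hasSum_single hp f).mapL g using 2 with i
  rw [← smul_eq_mul, ← map_smul, ← lp.single_smul, smul_eq_mul, mul_one]

variable [p.HolderConjugate q]

lemma sum_norm_apply_single_rpow_le (hp : p ≠ ∞) (hq : q ≠ ∞)
    (g : StrongDual 𝕜 (lp (fun _ : ι => 𝕜) p)) (s : Finset ι) :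
    ∑ i ∈ s, ‖g (lp.single p i 1)‖ ^ q.toReal ≤ ‖g‖ ^ q.toReal := by
  have hpq := ENNReal.HolderConjugate.toReal_of_ne_top hp hq
  set a : ι → 𝕜 := fun i => g (lp.single p i 1)
  set S := ∑ i ∈ s, ‖a i‖ ^ q.toReal
  -- The test vector `x i = ‖a i‖ ^ q / a i` (junk `0 / 0 = 0` where `a i = 0`) on `s`
  -- attains equality in Hölder's inequality: `g x = S = ‖x‖ ^ p`.
  set x := ∑ i ∈ s, lp.single p i (((‖a i‖ ^ q.toReal : ℝ) : 𝕜) / a i)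
  have hgx : g x = (S : 𝕜) := by
    simp only [x, S, map_sum]
    refine Finset.sum_congr rfl fun i _ => ?_
    rw [← mul_one (_ / a i), ← smul_eq_mul, lp.single_smul, map_smul, smul_eq_mul,
      RCLike.ofReal_norm_rpow_div_mul_self _ hpq.symm.ne_zero]
  have hx : ‖x‖ ^ p.toReal = S := by
    rw [lp.norm_sum_single hpq.pos]
    exact Finset.sum_congr rfl fun i _ => RCLike.norm_ofReal_norm_rpow_div_self_rpow hpq (a i)
  refine hpq.le_rpow_of_le_mul_rpow (by positivity) (norm_nonneg g) ?_
  calc S = ‖g x‖ := by rw [hgx, RCLike.norm_ofReal, abs_of_nonneg (by positivity)]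
    _ ≤ ‖g‖ * ‖x‖ := g.le_opNorm x
    _ = ‖g‖ * S ^ p.toReal⁻¹ := by rw [← hx, Real.rpow_rpow_inv (norm_nonneg x) hpq.ne_zero]

variable [Fact (1 ≤ q)]

lemma toStrongDual_apply_single (a : lp (fun _ : ι => 𝕜) q) (i : ι) :
    toStrongDual p q a (lp.single p i 1) = a i := by
  rw [toStrongDual_apply, tsum_eq_single i fun j hj => by
    rw [lp.single_apply_ne p i _ hj, mul_zero], lp.single_apply_self, mul_one]

lemma norm_toStrongDual (hp : p ≠ ∞) (hq : q ≠ ∞) (a : lp (fun _ : ι => 𝕜) q) :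
    ‖toStrongDual p q a‖ = ‖a‖ := by
  refine le_antisymm ?_ ?_
  · exact ((toStrongDual (𝕜 := 𝕜) (ι := ι) p q).le_of_opNorm_le norm_toStrongDual_le_one
      a).trans_eq (one_mul _)
  · have hq₀ : 0 < q.toReal := (ENNReal.HolderConjugate.toReal_of_ne_top hp hq).symm.pos
    refine lp.norm_le_of_forall_sum_le hq₀ (norm_nonneg _) fun s => ?_
    simpa only [toStrongDual_apply_single] using
      sum_norm_apply_single_rpow_le hp hq (toStrongDual p q a) s

lemma toStrongDual_surjective (hp : p ≠ ∞) (hq : q ≠ ∞) :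
    Function.Surjective (toStrongDual p q : lp (fun _ : ι => 𝕜) q → _) := fun g =>
  ⟨⟨fun i => g (lp.single p i 1), memℓp_gen' (sum_norm_apply_single_rpow_le hp hq g)⟩,
    ContinuousLinearMap.ext fun f => by
      rw [toStrongDual_apply, ← (hasSum_mul_apply_single hp g f).tsum_eq]
      exact tsum_congr fun i => mul_comm _ _⟩

noncomputable def dualEquiv (hp : p ≠ ∞) (hq : q ≠ ∞) :
    lp (fun _ : ι => 𝕜) q ≃ₗᵢ[𝕜] StrongDual 𝕜 (lp (fun _ : ι => 𝕜) p) :=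
  .ofSurjective ⟨(toStrongDual p q).toLinearMap, norm_toStrongDual hp hq⟩
    (toStrongDual_surjective hp hq)

lemma dualEquiv_symm_apply (hp : p ≠ ∞) (hq : q ≠ ∞) (g : StrongDual 𝕜 (lp (fun _ : ι => 𝕜) p))
    (i : ι) : (dualEquiv hp hq).symm g i = g (lp.single p i 1) := by
  conv_rhs => rw [← (dualEquiv hp hq).apply_symm_apply g]
  exact (toStrongDual_apply_single _ i).symm

end lp

namespace bv

variable (P : ℝ≥0∞)

lemma toLp_surjective : Function.Surjective (toLp P) := fun y =>
  ⟨⟨deltaL.symm y, show Memℓp (deltaL (deltaL.symm y)) P by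
    rw [LinearEquiv.apply_symm_apply]; exact y.2⟩,
    Subtype.ext (deltaL.apply_symm_apply y)⟩

variable [Fact (1 ≤ P)]

noncomputable def equivLp : bv P ≃ₗᵢ[ℂ] lp (fun _ : ℕ => ℂ) P :=
  .ofSurjective ⟨toLp P, fun _ => rfl⟩ (toLp_surjective P)

lemma equivLp_bvB (k : ℕ) : equivLp P (bvB P k) = lp.single P k 1 := by
  ext n
  change delta (bSeq k) n = _
  rw [delta_bSeq, lp.single_apply, Pi.single_apply, eSeq]

end bv

theorem bvp_dual_isometric_lq_general (p q : ℝ) (hp : 1 < p)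
    (hpq : 1 / p + 1 / q = 1) [Fact (1 ≤ ENNReal.ofReal p)] [Fact (1 ≤ ENNReal.ofReal q)] :
    ∃ ψ : (bv (ENNReal.ofReal p) →L[ℂ] ℂ) ≃ₗᵢ[ℂ] lp (fun _ : ℕ => ℂ) (ENNReal.ofReal q),
      ∀ (f : bv (ENNReal.ofReal p) →L[ℂ] ℂ) (k : ℕ),
        (ψ f : ∀ _ : ℕ, ℂ) k = f (bvB (ENNReal.ofReal p) k) := by
  have hpq' : p.HolderConjugate q :=
    Real.holderConjugate_iff.mpr ⟨hp, by simpa only [one_div] using hpq⟩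
  have := hpq'.ennrealOfReal
  let e := lp.dualEquiv (𝕜 := ℂ) (ι := ℕ) (p := ENNReal.ofReal p) (q := ENNReal.ofReal q)
    ENNReal.ofReal_ne_top ENNReal.ofReal_ne_top
  refine ⟨(bv.equivLp _).strongDualCongr.trans e.symm, fun f k => ?_⟩
  rw [LinearIsometryEquiv.trans_apply, lp.dualEquiv_symm_apply,
    LinearIsometryEquiv.strongDualCongr_apply, ← bv.equivLp_bvB,
    LinearIsometryEquiv.symm_apply_apply]

/-- For conjugate exponents `1 < p, q < ∞`, the map `ψ : bv_p* → l_q`,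
`ψ(f) = (f(b^{(k)}))_{k≥1}`, is an isometric linear isomorphism; in particular `bv_p*` is
isometrically isomorphic to `l_q`. -/
theorem bvp_dual_isometric_lq (p q : ℝ) (hp : 1 < p) (hq : 1 < q)
    (hpq : 1 / p + 1 / q = 1) [Fact (1 ≤ ENNReal.ofReal p)] [Fact (1 ≤ ENNReal.ofReal q)] :
    ∃ ψ : (bv (ENNReal.ofReal p) →L[ℂ] ℂ) ≃ₗᵢ[ℂ] lp (fun _ : ℕ => ℂ) (ENNReal.ofReal q),
      ∀ (f : bv (ENNReal.ofReal p) →L[ℂ] ℂ) (k : ℕ),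
        (ψ f : ∀ _ : ℕ, ℂ) k = f (bvB (ENNReal.ofReal p) k) :=
  bvp_dual_isometric_lq_general p q hp hpq
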